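/- Let δ_n = n^{−α/(2α+1)} with α > 1/2, let Π = N(0, n^{−1/(2α+1)}Σ_α^{−1}) be the Gaussian sieve prior on ℝ^p with Σ_α = diag(1,2^{2α},…,p^{2α}), suppose p ≤ Cnδ_n² for some C > 0, let θ_{*,p} ∈ ℝ^p with ‖θ_{*,p}‖_α ≤ c₀, and set 𝓑_{n,r} = {θ ∈ ℝ^p : ‖θ−θ_{*,p}‖ ≤ δ_n, ‖θ‖_α ≤ r}. Then for any sufficiently large r ≥ max(4, 2c₀) there exists a constant c > 0, depending only on C, α, c₀ and r, such that Π(𝓑_{n,r}) ≥ e^{−cnδ_n²}. -/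

import Mathlib

open MeasureTheory ProbabilityTheory Real
open scoped ENNReal NNReal BigOperators

noncomputable section

/-- The rescaled Gaussian sieve prior `N(0, n^{-1/(2α+1)}Σ_α^{-1})` on `ℝ^p`, whose
coordinates are independent centred Gaussians with variances `n^{-1/(2α+1)} k^{-2α}`. -/
def sievePrior (α : ℝ) (n p : ℕ) : Measure (EuclideanSpace ℝ (Fin p)) :=
  (Measure.pi fun i : Fin p => gaussianReal 0
      (Real.toNNReal ((n : ℝ) ^ (-(1 : ℝ) / (2 * α + 1)) * (((i : ℕ) : ℝ) + 1) ^ (-(2 * α))))).map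
    ((EuclideanSpace.equiv (Fin p) ℝ).symm)

/-- The Sobolev-type norm `‖θ‖_α` on `ℝ^p`, `‖θ‖_α² = Σ_{k=1}^p k^{2α} θ_k²`. -/
def normα {p : ℕ} (α : ℝ) (θ : EuclideanSpace ℝ (Fin p)) : ℝ :=
  Real.sqrt (∑ i : Fin p, (((i : ℕ) : ℝ) + 1) ^ (2 * α) * θ i ^ 2)

/-- Zero-extension of a vector `θ ∈ ℝ^p` to an element of sequence space. -/
def emb {p : ℕ} (θ : EuclideanSpace ℝ (Fin p)) : ℕ → ℝ :=
  fun k => if h : k < p then θ ⟨k, h⟩ else 0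

/-- `θ` lies in the Sobolev ball of `h^α(ℕ)` of radius `r`:
the series `Σ_k k^{2α}θ_k²` converges and `‖θ‖_α ≤ r`. -/
def SobLe (α : ℝ) (θ : ℕ → ℝ) (r : ℝ) : Prop :=
  Summable (fun k : ℕ => ((k : ℝ) + 1) ^ (2 * α) * θ k ^ 2) ∧
    Real.sqrt (∑' k : ℕ, ((k : ℝ) + 1) ^ (2 * α) * θ k ^ 2) ≤ r

/-- `ℓ²(ℕ)`-distance between two sequences. -/
def l2dist (θ θ' : ℕ → ℝ) : ℝ :=
  Real.sqrt (∑' k : ℕ, (θ k - θ' k) ^ 2)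

/-- The Hellinger distance `h(θ, θ')` between the laws with `ν`-densities
`p_θ` and `p_{θ'}`. -/
def hell {Z : Type*} [MeasurableSpace Z] (ν : Measure Z)
    (pdens : (ℕ → ℝ) → Z → ℝ) (θ θ' : ℕ → ℝ) : ℝ :=
  Real.sqrt (∫ z, (Real.sqrt (pdens θ z) - Real.sqrt (pdens θ' z)) ^ 2 ∂ν)

/-! Write `N = n^{1/(2α+1)} = nδ_n²`, so that `δ_n = N^{-α}` and the `k`-th coordinate of the
prior is `N(0, v_k)` with `v_k = N⁻¹k^{-2α}`. Since `‖·‖_α ≤ p^α‖·‖` and `p ≤ CN`, the cube of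
half-width `ε = δ_n/√p` around `θ_{*,p}` lies in `𝓑_{n,r}` as soon as `r ≥ c₀ + C^α`. Its prior
mass is a product of one-dimensional Gaussian probabilities, the `k`-th at least
`exp(-(2 + log⁺(√v_k/ε) + θ_k²/v_k))`. Summing over `k ≤ p`, the constants give `2p ≤ 2CN`, the
quadratic terms give `N‖θ_{*,p}‖_α² ≤ c₀²N`, and the logarithms, bounded by
`log x ≤ 2α x^{1/(2α)}` together with `Σ_{k≤p} k^{-1/2} ≤ 2√p`, give `O(N)`. -/

open Set Finset

theorem gaussianReal_Icc_ge_of_sq_le (m a : ℝ) {w L : ℝ} (hw : 0 < w) (hL : 0 < L)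
    (hLw : L ^ 2 ≤ w) :
    ENNReal.ofReal (2 * L * ((√(2 * π * w))⁻¹ * exp (-((a - m) ^ 2 / w) - 1)))
      ≤ gaussianReal m w.toNNReal (Icc (a - L) (a + L)) := by
  have hw' : w.toNNReal ≠ 0 := by simpa using hw
  have hdens : ∀ x ∈ Icc (a - L) (a + L),
      ENNReal.ofReal ((√(2 * π * w))⁻¹ * exp (-((a - m) ^ 2 / w) - 1))
        ≤ gaussianPDF m w.toNNReal x := by
    intro x hx
    rw [gaussianPDF, gaussianPDFReal, Real.coe_toNNReal _ hw.le]
    gcongr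
    have hxa : (x - a) ^ 2 ≤ w :=
      (sq_le_sq' (by linarith [hx.1]) (by linarith [hx.2])).trans hLw
    have : (x - m) ^ 2 / (2 * w) ≤ (a - m) ^ 2 / w + 1 := by
      rw [div_add_one hw.ne', div_le_div_iff₀ (by positivity) hw]
      nlinarith [sq_nonneg (x - 2 * a + m)]
    linarith [neg_div (2 * w) ((x - m) ^ 2)]
  have hvol : volume (Icc (a - L) (a + L)) = ENNReal.ofReal (2 * L) := by
    rw [Real.volume_Icc]; ring_nf
  rw [gaussianReal_apply _ hw', ENNReal.ofReal_mul (by positivity), mul_comm, ← hvol,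
    ← setLIntegral_const]
  exact setLIntegral_mono (measurable_gaussianPDF _ _) hdens

theorem exp_neg_one_le_two_div_sqrt_two_pi : exp (-1) ≤ 2 / √(2 * π) := by
  have h2 : (2 : ℝ) ≤ exp 1 := by linarith [add_one_le_exp (1 : ℝ)]
  have h4 : √(2 * π) ≤ 4 := Real.sqrt_le_iff.mpr ⟨by norm_num, by nlinarith [pi_lt_four]⟩
  have hpos : 0 < √(2 * π) := by positivity
  rw [exp_neg, le_div_iff₀ hpos]
  calc (exp 1)⁻¹ * √(2 * π) ≤ 2⁻¹ * 4 := by gcongr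
    _ = 2 := by norm_num

theorem gaussianReal_Icc_ge (m a : ℝ) {w ε : ℝ} (hw : 0 < w) (hε : 0 < ε) :
    ENNReal.ofReal (exp (-(2 + log (max 1 (√w / ε)) + (a - m) ^ 2 / w)))
      ≤ gaussianReal m w.toNNReal (Icc (a - ε) (a + ε)) := by
  set M := max 1 (√w / ε)
  set L := min ε √w
  have hsw : 0 < √w := Real.sqrt_pos.mpr hw
  have hM : 0 < M := lt_max_of_lt_left one_pos
  have hL : 0 < L := lt_min hε hsw
  have hLM : L * M = √w := by
    simp only [L, M]
    rcases le_total ε √w with h | h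
    · rw [min_eq_left h, max_eq_right ((one_le_div hε).mpr h), mul_div_cancel₀ _ hε.ne']
    · rw [min_eq_right h, max_eq_left ((div_le_one hε).mpr h), mul_one]
  have hLw : L ^ 2 ≤ w := by
    rw [← Real.sq_sqrt hw.le]; gcongr; exact min_le_right _ _
  refine le_trans ?_ ((gaussianReal_Icc_ge_of_sq_le m a hw hL hLw).trans
    (measure_mono (Icc_subset_Icc (by linarith [min_le_left ε √w])
      (by linarith [min_le_left ε √w]))))
  apply ENNReal.ofReal_le_ofReal
  calc exp (-(2 + log M + (a - m) ^ 2 / w))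
      = exp (-1) * (M⁻¹ * exp (-((a - m) ^ 2 / w) - 1)) := by
        rw [show -(2 + log M + (a - m) ^ 2 / w) = -1 + -log M + (-((a - m) ^ 2 / w) - 1) by ring,
          exp_add, exp_add, exp_neg (log M), exp_log hM, mul_assoc]
    _ ≤ 2 / √(2 * π) * (M⁻¹ * exp (-((a - m) ^ 2 / w) - 1)) := by
        gcongr; exact exp_neg_one_le_two_div_sqrt_two_pi
    _ = 2 * L * ((√(2 * π * w))⁻¹ * exp (-((a - m) ^ 2 / w) - 1)) := by
        rw [Real.sqrt_mul (by positivity) w, ← hLM]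
        field_simp

theorem measure_pi_gaussianReal_Icc_ge {ι : Type*} [Fintype ι] (m a v ε : ι → ℝ)
    (hv : ∀ i, 0 < v i) (hε : ∀ i, 0 < ε i) :
    ENNReal.ofReal (exp (-∑ i, (2 + log (max 1 (√(v i) / ε i)) + (a i - m i) ^ 2 / v i)))
      ≤ Measure.pi (fun i => gaussianReal (m i) (v i).toNNReal)
          (univ.pi fun i => Icc (a i - ε i) (a i + ε i)) := by
  rw [Measure.pi_pi, ← Finset.sum_neg_distrib, exp_sum,
    ENNReal.ofReal_prod_of_nonneg fun i _ => (exp_pos _).le]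
  exact Finset.prod_le_prod' fun i _ => gaussianReal_Icc_ge (m i) (a i) (hv i) (hε i)

theorem sum_range_inv_sqrt_succ_le (p : ℕ) : ∑ i ∈ range p, (√(i + 1))⁻¹ ≤ 2 * √p := by
  induction p with
  | zero => simp
  | succ q ih =>
    rw [Finset.sum_range_succ, Nat.cast_succ]
    have hq : √(q + 1) ^ 2 = q + 1 := Real.sq_sqrt (by positivity)
    have hq' : √q ^ 2 = q := Real.sq_sqrt (by positivity)
    have hpos : 0 < √(q + 1) := by positivity
    have step : (√(q + 1))⁻¹ ≤ 2 * √(q + 1) - 2 * √q := by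
      rw [inv_le_iff_one_le_mul₀ hpos]
      nlinarith [sq_nonneg (√(q + 1) - √q), Real.sqrt_nonneg q]
    linarith

theorem log_max_one_le_rpow_div {x s : ℝ} (hx : 0 ≤ x) (hs : 0 < s) :
    log (max 1 x) ≤ x ^ s / s := by
  rcases le_total x 1 with h | h
  · rw [max_eq_left h, log_one]; positivity
  · rw [max_eq_right h]; exact log_le_rpow_div hx hs

theorem sum_log_max_one_le {p : ℕ} {α K N : ℝ} (hα : 0 < α) (hK : 0 ≤ K) (hN : 0 ≤ N)
    (x : Fin p → ℝ) (hx₀ : ∀ i, 0 ≤ x i) (hx : ∀ i, x i ≤ K * (N / ((i : ℕ) + 1)) ^ α) :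
    ∑ i, log (max 1 (x i)) ≤ 4 * α * K ^ (1 / (2 * α)) * √(N * p) := by
  have hterm : ∀ i : Fin p, log (max 1 (x i))
      ≤ 2 * α * K ^ (1 / (2 * α)) * √N * (√((i : ℕ) + 1))⁻¹ := fun i => by
    calc log (max 1 (x i)) ≤ x i ^ (1 / (2 * α)) / (1 / (2 * α)) :=
          log_max_one_le_rpow_div (hx₀ i) (by positivity)
      _ ≤ (K * (N / ((i : ℕ) + 1)) ^ α) ^ (1 / (2 * α)) / (1 / (2 * α)) := by
          gcongr; exacts [hx₀ i, hx i]
      _ = 2 * α * K ^ (1 / (2 * α)) * √N * (√((i : ℕ) + 1))⁻¹ := by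
          rw [mul_rpow hK (by positivity), ← rpow_mul (by positivity),
            show α * (1 / (2 * α)) = 1 / 2 by field_simp, ← sqrt_eq_rpow,
            sqrt_div' _ (by positivity)]
          field_simp
  calc ∑ i, log (max 1 (x i))
      ≤ ∑ i : Fin p, 2 * α * K ^ (1 / (2 * α)) * √N * (√((i : ℕ) + 1))⁻¹ :=
        Finset.sum_le_sum fun i _ => hterm i
    _ = 2 * α * K ^ (1 / (2 * α)) * √N * ∑ i ∈ range p, (√(i + 1))⁻¹ := by
        rw [← Finset.mul_sum, Fin.sum_univ_eq_sum_range (fun i => (√(i + 1))⁻¹)]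
    _ ≤ 2 * α * K ^ (1 / (2 * α)) * √N * (2 * √p) := by
        gcongr; exact sum_range_inv_sqrt_succ_le p
    _ = 4 * α * K ^ (1 / (2 * α)) * √(N * p) := by rw [sqrt_mul hN]; ring

theorem norm_le_sqrt_card_mul_of_abs_le {ι : Type*} [Fintype ι] {x : EuclideanSpace ℝ ι}
    {ε : ℝ} (hε : 0 ≤ ε) (h : ∀ i, |x i| ≤ ε) : ‖x‖ ≤ √(Fintype.card ι) * ε := by
  rw [EuclideanSpace.norm_eq]
  calc √(∑ i, ‖x i‖ ^ 2) ≤ √(∑ _i : ι, ε ^ 2) := by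
        gcongr with i; exact h i
    _ = √(Fintype.card ι) * ε := by
        rw [Finset.sum_const, Finset.card_univ, nsmul_eq_mul, sqrt_mul (by positivity),
          sqrt_sq hε]

theorem normα_eq_norm {p : ℕ} (α : ℝ) (θ : EuclideanSpace ℝ (Fin p)) :
    normα α θ = ‖(WithLp.toLp 2 fun i : Fin p => (((i : ℕ) : ℝ) + 1) ^ α * θ i
      : EuclideanSpace ℝ (Fin p))‖ := by
  rw [normα, EuclideanSpace.norm_eq]
  congr 1
  refine Finset.sum_congr rfl fun i _ => ?_
  rw [Real.norm_eq_abs, sq_abs, mul_pow, ← rpow_mul_natCast (by positivity)]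
  norm_num [mul_comm α]

theorem normα_add_le {p : ℕ} (α : ℝ) (θ η : EuclideanSpace ℝ (Fin p)) :
    normα α (θ + η) ≤ normα α θ + normα α η := by
  have hsplit : (WithLp.toLp 2 fun i : Fin p => (((i : ℕ) : ℝ) + 1) ^ α * (θ + η) i
      : EuclideanSpace ℝ (Fin p))
      = WithLp.toLp 2 (fun i : Fin p => (((i : ℕ) : ℝ) + 1) ^ α * θ i)
        + WithLp.toLp 2 (fun i : Fin p => (((i : ℕ) : ℝ) + 1) ^ α * η i) := by
    rw [← WithLp.toLp_add]; congr 1; ext i; simp [mul_add]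
  simp only [normα_eq_norm, hsplit]
  exact norm_add_le _ _

theorem normα_le_rpow_mul_norm {p : ℕ} {α : ℝ} (hα : 0 ≤ α) (θ : EuclideanSpace ℝ (Fin p)) :
    normα α θ ≤ (p : ℝ) ^ α * ‖θ‖ := by
  rw [normα, EuclideanSpace.norm_eq, ← sqrt_sq (by positivity : 0 ≤ (p : ℝ) ^ α),
    ← sqrt_mul (by positivity), Finset.mul_sum]
  simp_rw [Real.norm_eq_abs, sq_abs]
  gcongr √(∑ _, ?_ * _) with i
  rw [← rpow_mul_natCast (by positivity), mul_comm α, Nat.cast_ofNat]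
  gcongr
  exact_mod_cast i.isLt

theorem normα_le_of_norm_sub_le {p : ℕ} {α δ : ℝ} (hα : 0 ≤ α)
    {θ θ' : EuclideanSpace ℝ (Fin p)} (h : ‖θ - θ'‖ ≤ δ) :
    normα α θ ≤ normα α θ' + (p : ℝ) ^ α * δ := by
  calc normα α θ = normα α (θ' + (θ - θ')) := by rw [add_sub_cancel]
    _ ≤ normα α θ' + (p : ℝ) ^ α * ‖θ - θ'‖ :=
        (normα_add_le α _ _).trans (by gcongr; exact normα_le_rpow_mul_norm hα _)
    _ ≤ normα α θ' + (p : ℝ) ^ α * δ := by gcongr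

theorem sqrt_variance_div_le {α C N : ℝ} (hC : 0 ≤ C) (hN : 0 < N) {p : ℕ}
    (hp : (p : ℝ) ≤ C * N) (k : ℕ) :
    √(N⁻¹ * ((k : ℝ) + 1) ^ (-(2 * α))) / (N ^ (-α) / √p) ≤ √C * (N / (k + 1)) ^ α := by
  have hk : (0 : ℝ) < k + 1 := by positivity
  have hsqrt : √(N⁻¹ * ((k : ℝ) + 1) ^ (-(2 * α))) = (√N)⁻¹ * (((k : ℝ) + 1) ^ α)⁻¹ := by
    rw [show ((k : ℝ) + 1) ^ (-(2 * α)) = ((((k : ℝ) + 1) ^ α) ^ 2)⁻¹ by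
        rw [← rpow_mul_natCast hk.le, ← rpow_neg hk.le]; ring_nf,
      sqrt_mul (by positivity), sqrt_inv, sqrt_inv, sqrt_sq (by positivity)]
  have hp' : √p / √N ≤ √C := by
    rw [div_le_iff₀ (sqrt_pos.2 hN), ← sqrt_mul hC]; exact sqrt_le_sqrt hp
  rw [hsqrt, div_rpow hN.le hk.le, rpow_neg hN.le]
  calc (√N)⁻¹ * (((k : ℝ) + 1) ^ α)⁻¹ / ((N ^ α)⁻¹ / √p)
      = √p / √N * (N ^ α / ((k : ℝ) + 1) ^ α) := by field_simp
    _ ≤ √C * (N ^ α / ((k : ℝ) + 1) ^ α) := by gcongr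

theorem sum_sq_div_variance_eq (α N : ℝ) {p : ℕ} (θ : EuclideanSpace ℝ (Fin p)) :
    ∑ i, θ i ^ 2 / (N⁻¹ * (((i : ℕ) : ℝ) + 1) ^ (-(2 * α))) = N * normα α θ ^ 2 := by
  rw [normα, sq_sqrt (by positivity), Finset.mul_sum]
  refine Finset.sum_congr rfl fun i _ => ?_
  rw [rpow_neg (by positivity), div_eq_mul_inv, mul_inv, inv_inv, inv_inv]
  ring

theorem measure_pi_gaussianReal_cube_ge {α C c₀ N : ℝ} (hα : 0 < α) (hC : 0 < C) (hN : 0 < N)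
    {p : ℕ} (hp : (p : ℝ) ≤ C * N) (θstar : EuclideanSpace ℝ (Fin p))
    (hθ : normα α θstar ≤ c₀) :
    ENNReal.ofReal (exp (-((2 * C + 4 * α * √C ^ (1 / (2 * α)) * √C + c₀ ^ 2) * N)))
      ≤ Measure.pi
          (fun i : Fin p => gaussianReal 0 (N⁻¹ * (((i : ℕ) : ℝ) + 1) ^ (-(2 * α))).toNNReal)
          (univ.pi fun i => Icc (θstar i - N ^ (-α) / √p) (θstar i + N ^ (-α) / √p)) := by
  set v : Fin p → ℝ := fun i => N⁻¹ * (((i : ℕ) : ℝ) + 1) ^ (-(2 * α))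
  set ε := N ^ (-α) / √p
  have hv : ∀ i, 0 < v i := fun i => by positivity
  have hε : ∀ _ : Fin p, 0 < ε := fun i => by
    have : (0 : ℝ) < p := by exact_mod_cast i.pos
    positivity
  refine le_trans ?_ (measure_pi_gaussianReal_Icc_ge 0 (fun i => θstar i) v (fun _ => ε) hv hε)
  gcongr
  simp only [Pi.zero_apply, sub_zero]
  rw [Finset.sum_add_distrib, Finset.sum_add_distrib]
  have hconst : ∑ _ : Fin p, (2 : ℝ) ≤ 2 * C * N := by
    rw [Finset.sum_const, Finset.card_univ, Fintype.card_fin, nsmul_eq_mul]; linarith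
  have hlog : ∑ i, log (max 1 (√(v i) / ε)) ≤ 4 * α * √C ^ (1 / (2 * α)) * √C * N := by
    have hNp : √(N * p) ≤ √C * N := by
      calc √(N * p) ≤ √(C * N ^ 2) := sqrt_le_sqrt (by nlinarith)
        _ = √C * N := by rw [sqrt_mul hC.le, sqrt_sq hN.le]
    calc ∑ i, log (max 1 (√(v i) / ε)) ≤ 4 * α * √C ^ (1 / (2 * α)) * √(N * p) :=
          sum_log_max_one_le hα (sqrt_nonneg C) hN.le _ (fun i => by positivity)
            fun i => sqrt_variance_div_le hC.le hN hp i
      _ ≤ 4 * α * √C ^ (1 / (2 * α)) * (√C * N) := by gcongr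
      _ = 4 * α * √C ^ (1 / (2 * α)) * √C * N := by ring
  have hquad : ∑ i, θstar i ^ 2 / v i ≤ c₀ ^ 2 * N := by
    rw [sum_sq_div_variance_eq, mul_comm]
    gcongr
    exact sqrt_nonneg _
  linarith

theorem cube_subset_preimage_smallBall {α C c₀ N r : ℝ} (hα : 0 ≤ α) (hN : 0 < N) {p : ℕ}
    (hp : (p : ℝ) ≤ C * N) {θstar : EuclideanSpace ℝ (Fin p)} (hθ : normα α θstar ≤ c₀)
    (hr : c₀ + C ^ α ≤ r) :
    univ.pi (fun i => Icc (θstar i - N ^ (-α) / √p) (θstar i + N ^ (-α) / √p))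
      ⊆ (EuclideanSpace.equiv (Fin p) ℝ).symm ⁻¹'
          {θ | ‖θ - θstar‖ ≤ N ^ (-α) ∧ normα α θ ≤ r} := by
  intro y hy
  set θ := (EuclideanSpace.equiv (Fin p) ℝ).symm y
  have hcoord : ∀ i, |(θ - θstar) i| ≤ N ^ (-α) / √p := fun i => by
    obtain ⟨hlo, hhi⟩ := hy i trivial
    change |y i - θstar i| ≤ _
    exact abs_sub_le_iff.2 ⟨by linarith, by linarith⟩
  have hdist : ‖θ - θstar‖ ≤ N ^ (-α) := by
    refine (norm_le_sqrt_card_mul_of_abs_le (by positivity) hcoord).trans ?_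
    rw [Fintype.card_fin]
    rcases eq_or_ne (√(p : ℝ)) 0 with h | h
    · rw [h, zero_mul]; positivity
    · rw [mul_div_cancel₀ _ h]
  refine ⟨hdist, (normα_le_of_norm_sub_le hα hdist).trans ?_⟩
  have hscale : (p : ℝ) ^ α * N ^ (-α) ≤ C ^ α := by
    rw [rpow_neg hN.le, ← div_eq_mul_inv, ← div_rpow (by positivity) hN.le]
    exact rpow_le_rpow (by positivity) ((div_le_iff₀ hN).2 hp) hα
  linarith

theorem sieve_prior_small_ball_general
    (α C c₀ : ℝ) (hα : 1 / 2 < α) (hC : 0 < C) :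
    ∃ r₀ : ℝ, ∀ r : ℝ, max 4 (2 * c₀) ≤ r → r₀ ≤ r →
      ∃ c > (0 : ℝ), ∀ (n p : ℕ) (θstar : EuclideanSpace ℝ (Fin p)),
        0 < n →
        (p : ℝ) ≤ C * n * ((n : ℝ) ^ (-(α / (2 * α + 1)))) ^ 2 →
        normα α θstar ≤ c₀ →
        ENNReal.ofReal (Real.exp (-c * n * ((n : ℝ) ^ (-(α / (2 * α + 1)))) ^ 2))
          ≤ sievePrior α n p
              {θ : EuclideanSpace ℝ (Fin p) |
                ‖θ - θstar‖ ≤ (n : ℝ) ^ (-(α / (2 * α + 1))) ∧ normα α θ ≤ r} := by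
  have hα₀ : 0 < α := by linarith
  refine ⟨c₀ + C ^ α, fun r _ hr => ⟨2 * C + 4 * α * √C ^ (1 / (2 * α)) * √C + c₀ ^ 2,
    by positivity, fun n p θstar hn hp hθ => ?_⟩⟩
  have hn' : (0 : ℝ) < n := by exact_mod_cast hn
  set N := (n : ℝ) ^ (1 / (2 * α + 1))
  have hN : 0 < N := by positivity
  have hδ : (n : ℝ) ^ (-(α / (2 * α + 1))) = N ^ (-α) := by
    rw [← rpow_mul hn'.le]; ring_nf
  have hvar : (n : ℝ) ^ (-(1 : ℝ) / (2 * α + 1)) = N⁻¹ := by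
    rw [← rpow_neg hn'.le]; ring_nf
  have hnδ : (n : ℝ) * (N ^ (-α)) ^ 2 = N := by
    have hexp : 1 + -(α / (2 * α + 1)) * (2 : ℕ) = 1 / (2 * α + 1) := by
      push_cast; field_simp; ring
    rw [← hδ, ← rpow_mul_natCast hn'.le, ← rpow_one_add' hn'.le (by rw [hexp]; positivity), hexp]
  rw [hδ, mul_assoc, hnδ] at hp
  rw [hδ, mul_assoc _ (n : ℝ), hnδ, neg_mul, sievePrior, hvar]
  calc _ ≤ _ := measure_pi_gaussianReal_cube_ge hα₀ hC hN hp θstar hθ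
    _ ≤ _ := measure_mono (cube_subset_preimage_smallBall hα₀.le hN hp hθ hr)
    _ ≤ _ := Measure.le_map_apply (by fun_prop) _

/-- **Lemma 5.12 (small-ball probability of the rescaled Gaussian sieve prior).** With
`δ_n = n^{-α/(2α+1)}` and `p ≤ Cnδ_n²`, for any sufficiently large `r ≥ max(4, 2c₀)`
there is `c > 0` (depending only on `C, α, c₀, r`) with
`Π(𝓑_{n,r}) ≥ e^{-cnδ_n²}`, where
`𝓑_{n,r} = {θ ∈ ℝ^p : ‖θ - θ_{*,p}‖ ≤ δ_n, ‖θ‖_α ≤ r}`. -/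
theorem sieve_prior_small_ball
    (α C c₀ : ℝ) (hα : 1 / 2 < α) (hC : 0 < C) (hc₀ : 0 < c₀) :
    ∃ r₀ : ℝ, ∀ r : ℝ, max 4 (2 * c₀) ≤ r → r₀ ≤ r →
      ∃ c > (0 : ℝ), ∀ (n p : ℕ) (θstar : EuclideanSpace ℝ (Fin p)),
        0 < n →
        (p : ℝ) ≤ C * n * ((n : ℝ) ^ (-(α / (2 * α + 1)))) ^ 2 →
        normα α θstar ≤ c₀ →
        ENNReal.ofReal (Real.exp (-c * n * ((n : ℝ) ^ (-(α / (2 * α + 1)))) ^ 2))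
          ≤ sievePrior α n p
              {θ : EuclideanSpace ℝ (Fin p) |
                ‖θ - θstar‖ ≤ (n : ℝ) ^ (-(α / (2 * α + 1))) ∧ normα α θ ≤ r} :=
  sieve_prior_small_ball_general α C c₀ hα hC
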